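/- arXiv:2205.00436 — 3 statements merged into one kernel-verified Lean document; each statement's English description precedes it below -/
import Mathlib

section
/- If each Ai is (εi, δi)-differentially private with independent randomness, then the composed mechanism D ↦ (A1(D), …, An(D)) is (Σᵢ εᵢ, Σᵢ δᵢ)-differentially private. -/
open MeasureTheory ProbabilityTheory Real
open scoped ENNReal

def ADP {D R : Type*} [MeasurableSpace R] (N : D → D → Prop) (ε δ : ℝ)
    (A : D → MeasureTheory.Measure R) : Prop :=
  ∀ d₁ d₂, N d₁ d₂ → ∀ S : Set R, MeasurableSet S →
    A d₁ S ≤ ENNReal.ofReal (Real.exp ε) * A d₂ S + ENNReal.ofReal δ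

/-!
Say `μ ≤ c ν + d` when this holds on every measurable set (`ApproxLE c d μ ν`). The bound passes
to measurable `[0, 1]`-valued test functions by the layer cake formula. For a product, integrate
the bound for the second factor over the first: capping the slice bound `c₂ ν₂ Sₓ` at `1`
(harmless, since `μ₂ Sₓ ≤ 1`) turns it into a test function for the first bound, giving
`μ₁ ⊗ μ₂ ≤ c₁ c₂ (ν₁ ⊗ ν₂) + (d₁ + d₂)`. Induction over the coordinates composes `n` mechanisms.
-/

section ApproxLE

variable {α β : Type*} [MeasurableSpace α] [MeasurableSpace β]

def ApproxLE (c d : ℝ≥0∞) (μ ν : Measure α) : Prop :=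
  ∀ S : Set α, MeasurableSet S → μ S ≤ c * ν S + d

variable {c d c₁ d₁ c₂ d₂ : ℝ≥0∞}

lemma lintegral_eq_setLIntegral_Ioc_meas_lt (μ : Measure α) {f : α → ℝ≥0∞}
    (hf : Measurable f) (hf1 : ∀ x, f x ≤ 1) :
    ∫⁻ x, f x ∂μ = ∫⁻ t in Set.Ioc (0 : ℝ) 1, μ {x | t < (f x).toReal} := by
  have hf_ofReal : ∀ x, ENNReal.ofReal (f x).toReal = f x := fun x =>
    ENNReal.ofReal_toReal ((hf1 x).trans_lt ENNReal.one_lt_top).ne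
  have hf_le_one : ∀ x, (f x).toReal ≤ 1 := fun x =>
    ENNReal.toReal_le_of_le_ofReal zero_le_one (by simpa using hf1 x)
  have h_empty : ∀ t ∈ Set.Ioi (1 : ℝ), μ {x | t < (f x).toReal} = 0 := fun t ht => by
    rw [Set.eq_empty_of_forall_notMem (s := {x | t < (f x).toReal})
      fun x hx => (hf_le_one x).not_gt (ht.trans hx), measure_empty]
  rw [lintegral_congr fun x => (hf_ofReal x).symm,
    lintegral_eq_lintegral_meas_lt μ (.of_forall fun _ => ENNReal.toReal_nonneg)
      hf.ennreal_toReal.aemeasurable, ← Set.Ioc_union_Ioi_eq_Ioi zero_le_one,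
    lintegral_union measurableSet_Ioi (Set.Ioc_disjoint_Ioi le_rfl),
    setLIntegral_congr_fun measurableSet_Ioi h_empty, lintegral_zero, add_zero]

lemma ApproxLE.lintegral_le {μ ν : Measure α} (h : ApproxLE c d μ ν) {f : α → ℝ≥0∞}
    (hf : Measurable f) (hf1 : ∀ x, f x ≤ 1) :
    ∫⁻ x, f x ∂μ ≤ c * ∫⁻ x, f x ∂ν + d := by
  have h_tail_meas : Measurable fun t : ℝ => ν {x | t < (f x).toReal} :=
    Antitone.measurable fun s t hst => measure_mono fun x hx => hst.trans_lt hx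
  calc ∫⁻ x, f x ∂μ = ∫⁻ t in Set.Ioc (0 : ℝ) 1, μ {x | t < (f x).toReal} :=
        lintegral_eq_setLIntegral_Ioc_meas_lt μ hf hf1
    _ ≤ ∫⁻ t in Set.Ioc (0 : ℝ) 1, (c * ν {x | t < (f x).toReal} + d) :=
        lintegral_mono fun t => h _ (measurableSet_lt measurable_const hf.ennreal_toReal)
    _ = c * ∫⁻ x, f x ∂ν + d := by
        rw [lintegral_add_right _ measurable_const, lintegral_const_mul c h_tail_meas,
          setLIntegral_const, Real.volume_Ioc, ← lintegral_eq_setLIntegral_Ioc_meas_lt ν hf hf1]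
        norm_num

lemma ApproxLE.prod {μ₁ ν₁ : Measure α} {μ₂ ν₂ : Measure β} [IsProbabilityMeasure μ₁]
    [IsProbabilityMeasure μ₂] [SFinite ν₂] (h₁ : ApproxLE c₁ d₁ μ₁ ν₁)
    (h₂ : ApproxLE c₂ d₂ μ₂ ν₂) :
    ApproxLE (c₁ * c₂) (d₁ + d₂) (μ₁.prod μ₂) (ν₁.prod ν₂) := by
  intro S hS
  set f : α → ℝ≥0∞ := fun x => min 1 (c₂ * ν₂ (Prod.mk x ⁻¹' S))
  have hf : Measurable f :=
    measurable_const.min (measurable_const.mul (measurable_measure_prodMk_left hS))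
  have h_slice : ∀ x, μ₂ (Prod.mk x ⁻¹' S) ≤ f x + d₂ := fun x =>
    calc μ₂ (Prod.mk x ⁻¹' S) ≤ min 1 (c₂ * ν₂ (Prod.mk x ⁻¹' S) + d₂) :=
          le_min prob_le_one (h₂ _ (measurable_prodMk_left hS))
      _ ≤ min (1 + d₂) (c₂ * ν₂ (Prod.mk x ⁻¹' S) + d₂) := min_le_min le_self_add le_rfl
      _ = f x + d₂ := min_add_add_right _ _ _
  have h_f_le : ∫⁻ x, f x ∂ν₁ ≤ c₂ * (ν₁.prod ν₂) S := by
    rw [Measure.prod_apply hS, ← lintegral_const_mul c₂ (measurable_measure_prodMk_left hS)]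
    exact lintegral_mono fun x => min_le_right _ _
  calc (μ₁.prod μ₂) S = ∫⁻ x, μ₂ (Prod.mk x ⁻¹' S) ∂μ₁ := Measure.prod_apply hS
    _ ≤ ∫⁻ x, f x ∂μ₁ + d₂ := (lintegral_mono h_slice).trans_eq <| by
        rw [lintegral_add_right _ measurable_const, lintegral_const, measure_univ, mul_one]
    _ ≤ c₁ * ∫⁻ x, f x ∂ν₁ + d₁ + d₂ := by
        gcongr
        exact h₁.lintegral_le hf fun x => min_le_left _ _
    _ ≤ c₁ * (c₂ * (ν₁.prod ν₂) S) + d₁ + d₂ := by gcongr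
    _ = c₁ * c₂ * (ν₁.prod ν₂) S + (d₁ + d₂) := by ring

lemma ApproxLE.map {μ ν : Measure α} (h : ApproxLE c d μ ν) {g : α → β} (hg : Measurable g) :
    ApproxLE c d (μ.map g) (ν.map g) := fun S hS => by
  simpa only [Measure.map_apply hg hS] using h _ (hg hS)

lemma ApproxLE.pi {n : ℕ} {R : Fin n → Type*} [∀ i, MeasurableSpace (R i)]
    {μ ν : ∀ i, Measure (R i)} [∀ i, IsProbabilityMeasure (μ i)] [∀ i, SigmaFinite (ν i)]
    {c d : Fin n → ℝ≥0∞} (h : ∀ i, ApproxLE (c i) (d i) (μ i) (ν i)) :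
    ApproxLE (∏ i, c i) (∑ i, d i) (Measure.pi μ) (Measure.pi ν) := by
  induction n with
  | zero =>
    intro S _
    simp [Measure.pi_of_empty μ, Measure.pi_of_empty ν]
  | succ n ih =>
    have h_split := (h 0).prod (ih fun j => h ((0 : Fin (n + 1)).succAbove j))
    rw [Fin.prod_univ_succAbove c 0, Fin.sum_univ_succAbove d 0,
      ← (measurePreserving_piFinSuccAbove μ 0).symm.map_eq,
      ← (measurePreserving_piFinSuccAbove ν 0).symm.map_eq]
    exact h_split.map (MeasurableEquiv.piFinSuccAbove R 0).symm.measurable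

end ApproxLE

/-- Sequential composition of n approximately DP mechanisms with independent randomness. -/
theorem adp_composition_n {D : Type*} {n : ℕ} {R : Fin n → Type*}
    [∀ i, MeasurableSpace (R i)]
    (N : D → D → Prop) (ε δ : Fin n → ℝ) (hδ : ∀ i, 0 ≤ δ i)
    (A : ∀ i, D → Measure (R i))
    [∀ i d, IsProbabilityMeasure (A i d)]
    (hA : ∀ i, ADP N (ε i) (δ i) (A i)) :
    ADP N (∑ i, ε i) (∑ i, δ i) (fun d => Measure.pi (fun i => A i d)) := by
  intro d₁ d₂ hN
  have h_exp : ∏ i, ENNReal.ofReal (exp (ε i)) = ENNReal.ofReal (exp (∑ i, ε i)) := by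
    rw [exp_sum, ENNReal.ofReal_prod_of_nonneg fun i _ => (exp_pos _).le]
  have h_delta : ∑ i, ENNReal.ofReal (δ i) = ENNReal.ofReal (∑ i, δ i) :=
    (ENNReal.ofReal_sum_of_nonneg fun i _ => hδ i).symm
  rw [← h_exp, ← h_delta]
  exact ApproxLE.pi fun i => hA i d₁ d₂ hN
end

section
/- For a real-valued query f with ℓ2-sensitivity Δ2, the Gaussian mechanism A(D) = f(D) + N(0, σ²) with σ = (Δ2/ε)·√(2·ln(1.25/δ)) satisfies (ε, δ)-differential privacy for all ε ∈ (0,1) and δ ∈ (0,1). -/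
/-!
Write `μ₁ = f d₁`, `μ₂ = f d₂`, `v = σ²` and `a = μ₁ - μ₂`. On the set where the density ratio
`N(μ₁, v) / N(μ₂, v)` is at most `exp ε` the first measure is dominated by `exp ε` times the second;
the rest is the event `v ε < a y + a² / 2` for `y ~ N(0, v)`. By the symmetry of `N(0, v)` and
`|a| ≤ Δ` this event has at most the probability of `y > t = v ε / Δ - Δ / 2`, and the choice of `σ`
makes that tail at most `δ`: for `t ≥ 0` via `P(y > t) ≤ exp (-t² / 2v) / 2`, and for `t < 0`
(possible only when `δ > 0.93`) via the bound `1 / √(2πv)` on the density.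
-/

open MeasureTheory ProbabilityTheory Real
open scoped NNReal ENNReal

namespace ProbabilityTheory

variable {v : ℝ≥0}

lemma gaussianReal_apply_eq_zero_preimage_add (μ : ℝ) (s : Set ℝ) :
    gaussianReal μ v s = gaussianReal 0 v ((· + μ) ⁻¹' s) := by
  rw [← (measurableEmbedding_addRight μ).map_apply, gaussianReal_map_add_const, zero_add]

lemma gaussianReal_zero_preimage_neg (s : Set ℝ) :
    gaussianReal 0 v (Neg.neg ⁻¹' s) = gaussianReal 0 v s := by
  have h := (Homeomorph.neg ℝ).measurableEmbedding.map_apply (gaussianReal 0 v) s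
  simp only [Homeomorph.coe_neg] at h
  rw [← h, gaussianReal_map_neg, neg_zero]

lemma gaussianReal_Ioi_self (μ : ℝ) (hv : v ≠ 0) : gaussianReal μ v (Set.Ioi μ) = 2⁻¹ := by
  have := nullSingletonClass_gaussianReal (μ := μ) hv
  have hsymm : gaussianReal μ v (Set.Iio μ) = gaussianReal μ v (Set.Ioi μ) := by
    calc gaussianReal μ v (Set.Iio μ)
        = (gaussianReal μ v).map (2 * μ - ·) (Set.Iio μ) := by
          rw [gaussianReal_map_const_sub, two_mul, add_sub_cancel_right]
      _ = gaussianReal μ v (Set.Ioi μ) := by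
          rw [(measurableEmbedding_subLeft (2 * μ)).map_apply]
          congr 1
          ext x
          simp only [Set.mem_preimage, Set.mem_Iio, Set.mem_Ioi]
          constructor <;> intro <;> linarith
  have htotal := prob_add_prob_compl (μ := gaussianReal μ v) (measurableSet_Ioi (a := μ))
  rw [Set.compl_Ioi, ← measure_congr Iio_ae_eq_Iic, hsymm, ← two_mul] at htotal
  exact ENNReal.eq_inv_of_mul_eq_one_left (by rwa [mul_comm])

lemma gaussianPDFReal_le_exp_mul (hv : v ≠ 0) {μ₁ μ₂ c x : ℝ}
    (h : (x - μ₂) ^ 2 - (x - μ₁) ^ 2 ≤ 2 * v * c) :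
    gaussianPDFReal μ₁ v x ≤ exp c * gaussianPDFReal μ₂ v x := by
  have hv' : (0 : ℝ) < 2 * v := by positivity
  have hquot : ((x - μ₂) ^ 2 - (x - μ₁) ^ 2) / (2 * v) ≤ c := (div_le_iff₀' hv').2 h
  rw [gaussianPDFReal, gaussianPDFReal, mul_left_comm, ← exp_add]
  gcongr
  rw [sub_div] at hquot
  rw [neg_div, neg_div]
  linarith

lemma gaussianPDFReal_le_inv_sqrt (μ x : ℝ) : gaussianPDFReal μ v x ≤ (√(2 * π * v))⁻¹ := by
  rw [gaussianPDFReal]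
  refine mul_le_of_le_one_right (by positivity) (exp_le_one_iff.2 ?_)
  exact div_nonpos_of_nonpos_of_nonneg (by nlinarith) (by positivity)

lemma gaussianReal_le_exp_mul_of_forall_mem (hv : v ≠ 0) {μ₁ μ₂ c : ℝ} {s : Set ℝ}
    (h : ∀ x ∈ s, (x - μ₂) ^ 2 - (x - μ₁) ^ 2 ≤ 2 * v * c) :
    gaussianReal μ₁ v s ≤ ENNReal.ofReal (exp c) * gaussianReal μ₂ v s := by
  rw [gaussianReal_apply _ hv, gaussianReal_apply _ hv,
    ← lintegral_const_mul _ (measurable_gaussianPDF _ _)]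
  refine setLIntegral_mono ((measurable_gaussianPDF _ _).const_mul _) fun x hx => ?_
  rw [gaussianPDF, gaussianPDF, ← ENNReal.ofReal_mul (exp_nonneg _)]
  exact ENNReal.ofReal_le_ofReal (gaussianPDFReal_le_exp_mul hv (h x hx))

lemma gaussianReal_Ioc_le (μ : ℝ) (hv : v ≠ 0) (a b : ℝ) :
    gaussianReal μ v (Set.Ioc a b) ≤ ENNReal.ofReal ((b - a) / √(2 * π * v)) := by
  calc gaussianReal μ v (Set.Ioc a b)
      ≤ ∫⁻ _ in Set.Ioc a b, ENNReal.ofReal (√(2 * π * v))⁻¹ := by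
        rw [gaussianReal_apply _ hv]
        exact setLIntegral_mono measurable_const fun x _ =>
          ENNReal.ofReal_le_ofReal (gaussianPDFReal_le_inv_sqrt μ x)
    _ = ENNReal.ofReal ((b - a) / √(2 * π * v)) := by
        rw [setLIntegral_const, Real.volume_Ioc, ← ENNReal.ofReal_mul (by positivity),
          div_eq_mul_inv, mul_comm]

/-- Compare `N(0, v)` with `N(t, v)` on `(t, ∞)`, where the density ratio is at most
`exp (-t² / 2v)`; the factor `1/2` is the mass of `N(t, v)` there. -/
lemma gaussianReal_zero_Ioi_le_of_nonneg (hv : v ≠ 0) {t : ℝ} (ht : 0 ≤ t) :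
    gaussianReal 0 v (Set.Ioi t) ≤ ENNReal.ofReal (exp (-t ^ 2 / (2 * v)) / 2) := by
  have hv' : (0 : ℝ) < 2 * v := by positivity
  calc gaussianReal 0 v (Set.Ioi t)
      ≤ ENNReal.ofReal (exp (-t ^ 2 / (2 * v))) * gaussianReal t v (Set.Ioi t) := by
        refine gaussianReal_le_exp_mul_of_forall_mem hv fun x hx => ?_
        rw [mul_div_cancel₀ _ hv'.ne']
        nlinarith [Set.mem_Ioi.1 hx]
    _ = ENNReal.ofReal (exp (-t ^ 2 / (2 * v)) / 2) := by
        rw [gaussianReal_Ioi_self t hv, ENNReal.ofReal_div_of_pos two_pos, ENNReal.ofReal_ofNat,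
          ENNReal.div_eq_inv_mul, mul_comm]

lemma gaussianReal_zero_Ioi_le_of_nonpos (hv : v ≠ 0) {t : ℝ} (ht : t ≤ 0) :
    gaussianReal 0 v (Set.Ioi t) ≤ ENNReal.ofReal (2⁻¹ + -t / √(2 * π * v)) := by
  calc gaussianReal 0 v (Set.Ioi t)
      ≤ gaussianReal 0 v (Set.Ioi 0) + gaussianReal 0 v (Set.Ioc t 0) := by
        rw [← Set.Ioc_union_Ioi_eq_Ioi ht, Set.union_comm]
        exact measure_union_le _ _
    _ ≤ ENNReal.ofReal 2⁻¹ + ENNReal.ofReal ((0 - t) / √(2 * π * v)) := by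
        rw [gaussianReal_Ioi_self 0 hv, ENNReal.ofReal_inv_of_pos two_pos, ENNReal.ofReal_ofNat]
        gcongr
        exact gaussianReal_Ioc_le 0 hv t 0
    _ = ENNReal.ofReal (2⁻¹ + -t / √(2 * π * v)) := by
        rw [zero_sub,
          ENNReal.ofReal_add (by norm_num) (div_nonneg (neg_nonneg.2 ht) (sqrt_nonneg _))]

lemma gaussianReal_le_exp_mul_add (hv : v ≠ 0) (μ₁ μ₂ ε : ℝ) (s : Set ℝ) :
    gaussianReal μ₁ v s ≤ ENNReal.ofReal (exp ε) * gaussianReal μ₂ v s +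
      gaussianReal 0 v {y | v * ε < (μ₁ - μ₂) * y + (μ₁ - μ₂) ^ 2 / 2} := by
  set G := {x : ℝ | (x - μ₂) ^ 2 - (x - μ₁) ^ 2 ≤ 2 * v * ε}
  calc gaussianReal μ₁ v s
      ≤ gaussianReal μ₁ v (s ∩ G) + gaussianReal μ₁ v (s \ G) := measure_le_inter_add_sdiff _ _ _
    _ ≤ ENNReal.ofReal (exp ε) * gaussianReal μ₂ v (s ∩ G) +
          gaussianReal 0 v ((· + μ₁) ⁻¹' (s \ G)) := by
        rw [← gaussianReal_apply_eq_zero_preimage_add]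
        gcongr
        exact gaussianReal_le_exp_mul_of_forall_mem hv fun x hx => hx.2
    _ ≤ _ := by
        gcongr
        · exact Set.inter_subset_left
        · intro y hy
          have hy : 2 * v * ε < (y + μ₁ - μ₂) ^ 2 - (y + μ₁ - μ₁) ^ 2 := not_le.1 hy.2
          show v * ε < (μ₁ - μ₂) * y + (μ₁ - μ₂) ^ 2 / 2
          linarith

lemma gaussianReal_zero_setOf_lt_le_Ioi {a c Δ : ℝ} (hc : 0 ≤ c) (ha : |a| ≤ Δ) :
    gaussianReal 0 v {y | c < a * y + a ^ 2 / 2} ≤ gaussianReal 0 v (Set.Ioi (c / Δ - Δ / 2)) := by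
  have hsubset : ∀ b, 0 ≤ b → b ≤ Δ → {y | c < b * y + b ^ 2 / 2} ⊆ Set.Ioi (c / Δ - Δ / 2) := by
    intro b hb hbΔ y (hy : c < b * y + b ^ 2 / 2)
    have hb_pos : 0 < b := hb.lt_of_ne (by rintro rfl; linarith)
    have h1 : c / Δ ≤ c / b := div_le_div_of_nonneg_left hc hb_pos hbΔ
    have h2 : c / b < y + b / 2 := by
      rw [div_lt_iff₀ hb_pos]
      linarith
    show c / Δ - Δ / 2 < y
    linarith
  rcases le_total 0 a with ha0 | ha0
  · exact measure_mono (hsubset a ha0 ((le_abs_self a).trans ha))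
  · rw [← gaussianReal_zero_preimage_neg]
    refine measure_mono (subset_trans ?_
      (hsubset (-a) (neg_nonneg.2 ha0) ((neg_le_abs a).trans ha)))
    intro y (hy : c < a * -y + a ^ 2 / 2)
    show c < -a * y + (-a) ^ 2 / 2
    linarith

lemma gaussianReal_zero_Ioi_le_of_calibrated {ε δ Δ σ : ℝ} (hε : ε ∈ Set.Ioo (0 : ℝ) 1)
    (hδ : δ ∈ Set.Ioo (0 : ℝ) 1) (hΔ : 0 < Δ) (hσ : σ = (Δ / ε) * √(2 * log (1.25 / δ))) :
    gaussianReal 0 (σ ^ 2).toNNReal (Set.Ioi ((σ ^ 2).toNNReal * ε / Δ - Δ / 2)) ≤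
      ENNReal.ofReal δ := by
  obtain ⟨hε0, hε1⟩ := hε
  obtain ⟨hδ0, hδ1⟩ := hδ
  set L := log (1.25 / δ)
  have hδL : δ = 1.25 * exp (-L) := by
    rw [exp_neg, exp_log (by positivity)]
    field_simp
  have hL : 0.2 ≤ L := by
    rw [le_log_iff_exp_le (by positivity)]
    calc exp 0.2 ≤ 1 / (1 - 0.2) :=
          (exp_bound_div_one_sub_of_interval' (by norm_num) (by norm_num)).le
      _ = 1.25 := by norm_num
      _ ≤ 1.25 / δ := by rw [le_div_iff₀ hδ0]; nlinarith
  have hσ2 : σ ^ 2 = 2 * L * Δ ^ 2 / ε ^ 2 := by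
    rw [hσ, mul_pow, sq_sqrt (by linarith), div_pow]
    ring
  have hv : (σ ^ 2).toNNReal ≠ 0 := by
    rw [Ne, Real.toNNReal_eq_zero, not_le, hσ2]
    positivity
  have hv_coe : ((σ ^ 2).toNNReal : ℝ) = σ ^ 2 := Real.coe_toNNReal _ (sq_nonneg σ)
  rw [hv_coe]
  set t := σ ^ 2 * ε / Δ - Δ / 2
  have ht : t = Δ * (4 * L - ε) / (2 * ε) := by
    simp only [t, hσ2]
    field_simp
    ring
  rcases le_or_gt 0 t with ht0 | ht0
  · refine (gaussianReal_zero_Ioi_le_of_nonneg hv ht0).trans (ENNReal.ofReal_le_ofReal ?_)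
    have hexponent : -t ^ 2 / (2 * σ ^ 2) ≤ ε / 2 - L := by
      have : -t ^ 2 / (2 * σ ^ 2) = -(4 * L - ε) ^ 2 / (16 * L) := by
        rw [ht, hσ2]
        field_simp
        ring
      rw [this, div_le_iff₀ (by positivity)]
      nlinarith [sq_nonneg ε]
    have hexp_half : exp (ε / 2) < 2 := by
      refine (exp_bound_div_one_sub_of_interval' (by linarith) (by linarith)).trans_le ?_
      rw [div_le_iff₀ (by linarith)]
      linarith
    calc exp (-t ^ 2 / (2 * ((σ ^ 2).toNNReal : ℝ))) / 2
        ≤ exp (ε / 2 - L) / 2 := by rw [hv_coe]; gcongr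
      _ = exp (ε / 2) * exp (-L) / 2 := by rw [sub_eq_add_neg, exp_add]
      _ ≤ 2 * exp (-L) / 2 := by gcongr
      _ ≤ δ := by rw [hδL]; linarith [exp_pos (-L)]
  · refine (gaussianReal_zero_Ioi_le_of_nonpos hv ht0.le).trans (ENNReal.ofReal_le_ofReal ?_)
    rw [hv_coe]
    have hLε : 4 * L < ε := by
      by_contra! h
      rw [ht] at ht0
      exact ht0.not_ge (div_nonneg (mul_nonneg hΔ.le (by linarith)) (by linarith))
    have hδ_large : 0.9375 ≤ δ := by
      rw [hδL]
      linarith [add_one_le_exp (-L)]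
    have hσ_large : 0.4 * Δ ^ 2 ≤ σ ^ 2 := by
      have hε_sq : ε ^ 2 ≤ 1 := by nlinarith
      rw [hσ2, le_div_iff₀ (by positivity)]
      nlinarith [mul_le_mul_of_nonneg_left hε_sq (sq_nonneg Δ),
        mul_nonneg (sq_nonneg Δ) (sub_nonneg.2 hL)]
    have hsqrt : 1.25 * Δ ≤ √(2 * π * σ ^ 2) := by
      rw [le_sqrt' (by positivity)]
      nlinarith [pi_gt_three]
    have hnum : -t ≤ Δ / 2 := by
      rw [ht, neg_div', div_le_iff₀ (by positivity)]
      nlinarith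
    have hslope : -t / √(2 * π * σ ^ 2) ≤ 0.4 := by
      rw [div_le_iff₀ (hsqrt.trans_lt' (by positivity))]
      linarith
    linarith

end ProbabilityTheory

/-- The Gaussian mechanism with σ = (Δ₂/ε)·√(2·ln(1.25/δ)) is (ε, δ)-DP. -/
theorem gaussian_mechanism_adp {D : Type*}
    (N : D → D → Prop) (ε δ Δ : ℝ)
    (hε : ε ∈ Set.Ioo (0 : ℝ) 1) (hδ : δ ∈ Set.Ioo (0 : ℝ) 1) (hΔ : 0 < Δ)
    (f : D → ℝ)
    (hsens : ∀ d₁ d₂, N d₁ d₂ → |f d₁ - f d₂| ≤ Δ)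
    (σ : ℝ) (hσ : σ = (Δ / ε) * Real.sqrt (2 * Real.log (1.25 / δ))) :
    ADP N ε δ (fun d => gaussianReal (f d) (Real.toNNReal (σ ^ 2))) := by
  intro d₁ d₂ hN S _
  have hv : (σ ^ 2).toNNReal ≠ 0 := by
    have hlog : 0 < log (1.25 / δ) := log_pos (by rw [lt_div_iff₀ hδ.1]; linarith [hδ.2])
    have := hε.1
    rw [Ne, Real.toNNReal_eq_zero, not_le, hσ]
    positivity
  calc gaussianReal (f d₁) (σ ^ 2).toNNReal S
      ≤ ENNReal.ofReal (exp ε) * gaussianReal (f d₂) (σ ^ 2).toNNReal S +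
          gaussianReal 0 (σ ^ 2).toNNReal
            {y | (σ ^ 2).toNNReal * ε < (f d₁ - f d₂) * y + (f d₁ - f d₂) ^ 2 / 2} :=
        gaussianReal_le_exp_mul_add hv _ _ _ _
    _ ≤ ENNReal.ofReal (exp ε) * gaussianReal (f d₂) (σ ^ 2).toNNReal S +
          gaussianReal 0 (σ ^ 2).toNNReal (Set.Ioi ((σ ^ 2).toNNReal * ε / Δ - Δ / 2)) :=
        add_le_add le_rfl
          (gaussianReal_zero_setOf_lt_le_Ioi (by have := hε.1; positivity) (hsens d₁ d₂ hN))
    _ ≤ _ := add_le_add le_rfl (gaussianReal_zero_Ioi_le_of_calibrated hε hδ hΔ hσ)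
end

section
/- For two Gaussian distributions N(μ1, σ²) and N(μ2, σ²) on ℝ with |μ1 − μ2| ≤ Δ, the set of points x where the density ratio exceeds e^ε, i.e., |log(p1(x)/p2(x))| > ε, is contained in a tail region whose probability under N(μ1, σ²) is at most δ when σ ≥ (Δ/ε)·√(2·ln(1.25/δ)) and ε ∈ (0,1). -/
open MeasureTheory ProbabilityTheory Real

/-- Density of the Gaussian N(μ, σ²) on ℝ. -/
noncomputable def gaussPdf (μ σ x : ℝ) : ℝ :=
  (1 / (σ * Real.sqrt (2 * Real.pi))) * Real.exp (-(x - μ) ^ 2 / (2 * σ ^ 2))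

/-!
With `a = μ₁ - μ₂`, the log-density ratio `a (2 (x - μ₁) + a) / (2 σ²)` is affine in `x`, so it
exceeds `ε` in absolute value only on two half-lines: beyond `σ (u - ε / (2u))` from `μ₁` on one
side and beyond `σ (u + ε / (2u))` on the other, where `u = ε σ / |a| ≥ √(2 log (1.25 / δ))`.
With the tail bound `P(Z ≥ s) ≤ exp (-s² / 2) / 2` the two tails add up to
`exp (-u² / 2) cosh (ε / 2) ≤ (δ / 1.25) exp (ε² / 8) ≤ δ`. If `u - ε / (2u) < 0`, the
calibration forces `δ ≥ 15 / 16` and cruder bounds suffice.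
-/

open Set
open scoped NNReal

lemma exp_neg_sq_div_two_le_of_two_log_le {c δ u : ℝ} (hc : 0 < c) (hδ : 0 < δ)
    (hu : 2 * log (c / δ) ≤ u ^ 2) : exp (-u ^ 2 / 2) ≤ δ / c := calc
  exp (-u ^ 2 / 2) ≤ exp (-log (c / δ)) := exp_le_exp.mpr (by linarith)
  _ = δ / c := by rw [exp_neg, exp_log (by positivity), inv_div]

lemma sq_add_div_two_mul_self {u : ℝ} (hu : u ≠ 0) (η : ℝ) :
    (u + η / (2 * u)) ^ 2 = u ^ 2 + η + (η / (2 * u)) ^ 2 := by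
  field_simp
  ring

namespace ProbabilityTheory

variable {v : ℝ≥0}

lemma gaussianReal_real_Iic_sub (μ t : ℝ) :
    (gaussianReal μ v).real (Iic (μ - t)) = (gaussianReal μ v).real (Ici (μ + t)) := by
  have hreflect := gaussianReal_map_const_sub (μ := μ) (v := v) (2 * μ)
  rw [show 2 * μ - μ = μ by ring] at hreflect
  conv_lhs => rw [← hreflect, map_measureReal_apply (by fun_prop) measurableSet_Iic]
  congr 1
  ext x
  simp only [mem_preimage, mem_Iic, mem_Ici]
  constructor <;> intro <;> linarith

lemma gaussianReal_real_Ici_self (μ : ℝ) (hv : v ≠ 0) :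
    (gaussianReal μ v).real (Ici μ) = 1 / 2 := by
  have := nullSingletonClass_gaussianReal (μ := μ) hv
  have hsymm := gaussianReal_real_Iic_sub (v := v) μ 0
  have hIoi : (gaussianReal μ v).real (Ioi μ) = (gaussianReal μ v).real (Ici μ) :=
    measureReal_congr Ioi_ae_eq_Ici
  have htotal := probReal_add_probReal_compl (μ := gaussianReal μ v) (measurableSet_Iic (a := μ))
  rw [compl_Iic] at htotal
  simp only [sub_zero, add_zero] at hsymm
  linarith

lemma gaussianReal_real_apply (μ : ℝ) (hv : v ≠ 0) (s : Set ℝ) :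
    (gaussianReal μ v).real s = ∫ x in s, gaussianPDFReal μ v x := by
  rw [measureReal_def, gaussianReal_apply_eq_integral _ hv, ENNReal.toReal_ofReal]
  exact setIntegral_nonneg_of_ae (ae_of_all _ (gaussianPDFReal_nonneg μ v))

lemma gaussianPDFReal_le_exp_mul_gaussianPDFReal_add {μ t x : ℝ} (ht : 0 ≤ t) (hx : μ + t ≤ x) :
    gaussianPDFReal μ v x ≤ exp (-t ^ 2 / (2 * v)) * gaussianPDFReal (μ + t) v x := by
  simp only [gaussianPDFReal]
  rw [mul_left_comm, ← exp_add, ← add_div]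
  gcongr
  nlinarith

/-- Comparing with the Gaussian centred at `μ + t` keeps the factor `1 / 2` that a Chernoff bound
loses; the constant `1.25` of the theorem needs it. -/
lemma gaussianReal_real_Ici_add_le (μ : ℝ) (hv : v ≠ 0) {t : ℝ} (ht : 0 ≤ t) :
    (gaussianReal μ v).real (Ici (μ + t)) ≤ exp (-t ^ 2 / (2 * v)) / 2 := calc
  _ = ∫ x in Ici (μ + t), gaussianPDFReal μ v x := gaussianReal_real_apply μ hv _
  _ ≤ ∫ x in Ici (μ + t), exp (-t ^ 2 / (2 * v)) * gaussianPDFReal (μ + t) v x :=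
    setIntegral_mono_on (integrable_gaussianPDFReal μ v).integrableOn
      ((integrable_gaussianPDFReal (μ + t) v).const_mul _).integrableOn measurableSet_Ici
      fun x hx => gaussianPDFReal_le_exp_mul_gaussianPDFReal_add ht hx
  _ = exp (-t ^ 2 / (2 * v)) * (gaussianReal (μ + t) v).real (Ici (μ + t)) := by
    rw [integral_const_mul, gaussianReal_real_apply _ hv]
  _ = exp (-t ^ 2 / (2 * v)) / 2 := by
    rw [gaussianReal_real_Ici_self _ hv]
    ring

lemma gaussianPDFReal_le (μ : ℝ) (v : ℝ≥0) (x : ℝ) :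
    gaussianPDFReal μ v x ≤ (√(2 * π * v))⁻¹ := by
  rw [gaussianPDFReal]
  refine mul_le_of_le_one_right (by positivity) (exp_le_one_iff.mpr ?_)
  exact div_nonpos_of_nonpos_of_nonneg (neg_nonpos.mpr (sq_nonneg _)) (by positivity)

lemma gaussianReal_le_mul_volume (μ : ℝ) (hv : v ≠ 0) (s : Set ℝ) :
    gaussianReal μ v s ≤ ENNReal.ofReal (√(2 * π * v))⁻¹ * volume s := by
  rw [gaussianReal_apply _ hv, ← setLIntegral_const]
  exact lintegral_mono fun x => ENNReal.ofReal_le_ofReal (gaussianPDFReal_le μ v x)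

lemma gaussianReal_real_Ici_sub_le (μ : ℝ) (hv : v ≠ 0) {t : ℝ} (ht : 0 ≤ t) :
    (gaussianReal μ v).real (Ici (μ - t)) ≤ 1 / 2 + t / √(2 * π * v) := by
  have hcentral : (gaussianReal μ v).real (Ico (μ - t) μ) ≤ t / √(2 * π * v) := by
    refine ENNReal.toReal_le_of_le_ofReal (by positivity) ?_
    calc gaussianReal μ v (Ico (μ - t) μ)
        ≤ ENNReal.ofReal (√(2 * π * v))⁻¹ * ENNReal.ofReal t := by
          simpa using gaussianReal_le_mul_volume μ hv (Ico (μ - t) μ)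
      _ = ENNReal.ofReal (t / √(2 * π * v)) := by
          rw [← ENNReal.ofReal_mul (by positivity), div_eq_inv_mul]
  calc (gaussianReal μ v).real (Ici (μ - t))
      ≤ (gaussianReal μ v).real (Ico (μ - t) μ) + (gaussianReal μ v).real (Ici μ) := by
        rw [← Ico_union_Ici_eq_Ici (by linarith : μ - t ≤ μ)]
        exact measureReal_union_le _ _
    _ ≤ 1 / 2 + t / √(2 * π * v) := by
        rw [gaussianReal_real_Ici_self μ hv]
        linarith

/-- An upper bound for `P(Z ≥ s)`, `Z` standard normal; for `s < 0` it bounds the mass of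
`[s, 0)` by the maximum of the density. -/
noncomputable def stdGaussianTailBound (s : ℝ) : ℝ :=
  if 0 ≤ s then exp (-s ^ 2 / 2) / 2 else 1 / 2 - s / √(2 * π)

lemma gaussianReal_real_Ici_le_stdGaussianTailBound {σ : ℝ} (hσ : 0 < σ) (μ s : ℝ) :
    (gaussianReal μ (σ ^ 2).toNNReal).real (Ici (μ + σ * s)) ≤ stdGaussianTailBound s := by
  have hv : (σ ^ 2).toNNReal ≠ 0 := by simpa using hσ.ne'
  have hvσ : (((σ ^ 2).toNNReal : ℝ≥0) : ℝ) = σ ^ 2 := Real.coe_toNNReal _ (sq_nonneg σ)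
  unfold stdGaussianTailBound
  split_ifs with hs
  · convert gaussianReal_real_Ici_add_le μ hv (mul_nonneg hσ.le hs) using 3
    rw [hvσ]
    field_simp
  · convert gaussianReal_real_Ici_sub_le μ hv (t := σ * -s) (by nlinarith) using 3
    · ring
    · rw [hvσ, mul_comm (2 * π), sqrt_mul (sq_nonneg σ), sqrt_sq hσ.le]
      field_simp
      ring

lemma gaussianReal_real_Ici_union_Iic_le {σ : ℝ} (hσ : 0 < σ) (μ s₁ s₂ : ℝ) :
    (gaussianReal μ (σ ^ 2).toNNReal).real (Ici (μ + σ * s₁) ∪ Iic (μ - σ * s₂)) ≤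
      stdGaussianTailBound s₁ + stdGaussianTailBound s₂ := by
  refine (measureReal_union_le _ _).trans (add_le_add ?_ ?_)
  · exact gaussianReal_real_Ici_le_stdGaussianTailBound hσ μ s₁
  · rw [gaussianReal_real_Iic_sub]
    exact gaussianReal_real_Ici_le_stdGaussianTailBound hσ μ s₂

lemma stdGaussianTailBound_sub_add_le_of_nonneg {ε δ u : ℝ} (hε : ε ∈ Ioo 0 1) (hδ : 0 < δ)
    (hu : 2 * log (1.25 / δ) ≤ u ^ 2) (hu₀ : 0 < u) (hs : 0 ≤ u - ε / (2 * u)) :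
    stdGaussianTailBound (u - ε / (2 * u)) + stdGaussianTailBound (u + ε / (2 * u)) ≤ δ := by
  obtain ⟨hε₀, hε₁⟩ := hε
  have hs' : 0 ≤ u + ε / (2 * u) := by positivity
  have hexp (η : ℝ) : exp (-(u + η / (2 * u)) ^ 2 / 2) ≤ exp (-u ^ 2 / 2) * exp (-η / 2) := by
    rw [← exp_add, sq_add_div_two_mul_self hu₀.ne']
    gcongr
    nlinarith [sq_nonneg (η / (2 * u))]
  have hexp_one_eighth : exp (1 / 8) ≤ 8 / 7 := by
    have := exp_bound_div_one_sub_of_interval (x := 1 / 8) (by norm_num) (by norm_num)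
    norm_num at this ⊢
    linarith
  rw [stdGaussianTailBound, if_pos hs, stdGaussianTailBound, if_pos hs']
  calc exp (-(u - ε / (2 * u)) ^ 2 / 2) / 2 + exp (-(u + ε / (2 * u)) ^ 2 / 2) / 2
      ≤ exp (-u ^ 2 / 2) * ((exp (ε / 2) + exp (-(ε / 2))) / 2) := by
        have h_sub : exp (-(u - ε / (2 * u)) ^ 2 / 2) ≤ exp (-u ^ 2 / 2) * exp (ε / 2) := by
          simpa [sub_eq_add_neg, neg_div] using hexp (-ε)
        have h_add : exp (-(u + ε / (2 * u)) ^ 2 / 2) ≤ exp (-u ^ 2 / 2) * exp (-(ε / 2)) := by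
          simpa [neg_div] using hexp ε
        linarith
    _ = exp (-u ^ 2 / 2) * cosh (ε / 2) := by rw [cosh_eq]
    _ ≤ δ / 1.25 * exp (1 / 8) := by
        gcongr
        · exact exp_neg_sq_div_two_le_of_two_log_le (by norm_num) hδ hu
        · refine (cosh_le_exp_half_sq _).trans (exp_le_exp.mpr ?_)
          nlinarith
    _ ≤ δ / 1.25 * (8 / 7) := by gcongr
    _ ≤ δ := by norm_num; linarith

lemma stdGaussianTailBound_sub_add_le_of_neg {ε δ u : ℝ} (hε : ε < 1) (hδ : δ ∈ Ioo 0 1)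
    (hu : 2 * log (1.25 / δ) ≤ u ^ 2) (hu₀ : 0 < u) (hs : u - ε / (2 * u) < 0) :
    stdGaussianTailBound (u - ε / (2 * u)) + stdGaussianTailBound (u + ε / (2 * u)) ≤ δ := by
  obtain ⟨hδ₀, hδ₁⟩ := hδ
  have hε_lower : 2 * u ^ 2 < ε := by
    rw [sub_neg, lt_div_iff₀ (by positivity)] at hs
    linarith
  have hs' : 0 ≤ u + ε / (2 * u) := by
    have : 0 < ε := lt_of_le_of_lt (by positivity) hε_lower
    positivity
  have hu_sq : 2 / 5 ≤ u ^ 2 := by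
    have hlog : 1 / 5 ≤ log (1.25 / δ) := calc
      (1 / 5 : ℝ) ≤ log 1.25 := by
        have := one_sub_inv_le_log_of_pos (x := 1.25) (by norm_num)
        norm_num at this ⊢
        linarith
      _ ≤ log (1.25 / δ) := log_le_log (by norm_num) (by rw [le_div_iff₀ hδ₀]; linarith)
    linarith
  have hδ_lower : 15 / 16 ≤ δ := by
    have h₁ := exp_neg_sq_div_two_le_of_two_log_le (by norm_num) hδ₀ hu
    have h₂ := add_one_le_exp (-u ^ 2 / 2)
    rw [le_div_iff₀ (by norm_num)] at h₁
    nlinarith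
  have h_sub : -1 / 12 ≤ (u - ε / (2 * u)) / √(2 * π) := by
    have hsqrt : 2 ≤ √(2 * π) := by
      rw [le_sqrt (by norm_num) (by positivity)]
      nlinarith [pi_gt_three]
    have hgap : ε / (2 * u) - u ≤ 1 / 6 := by
      rw [sub_le_iff_le_add, div_le_iff₀ (by positivity)]
      nlinarith
    rw [le_div_iff₀ (by positivity)]
    nlinarith
  have h_add : exp (-(u + ε / (2 * u)) ^ 2 / 2) / 2 ≤ 5 / 16 := by
    have hsq : 6 / 5 ≤ (u + ε / (2 * u)) ^ 2 := by
      rw [sq_add_div_two_mul_self hu₀.ne']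
      nlinarith [sq_nonneg (ε / (2 * u))]
    have : exp (-(u + ε / (2 * u)) ^ 2 / 2) ≤ exp (-(3 / 5)) := exp_le_exp.mpr (by linarith)
    have : exp (-(3 / 5)) ≤ 5 / 8 := by
      rw [exp_neg, inv_le_comm₀ (exp_pos _) (by norm_num)]
      have := add_one_le_exp (3 / 5)
      norm_num at this ⊢
      linarith
    linarith
  rw [stdGaussianTailBound, if_neg hs.not_ge, stdGaussianTailBound, if_pos hs']
  linarith

lemma stdGaussianTailBound_sub_add_le {ε δ u : ℝ} (hε : ε ∈ Ioo 0 1) (hδ : δ ∈ Ioo 0 1)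
    (hu : 2 * log (1.25 / δ) ≤ u ^ 2) (hu₀ : 0 < u) :
    stdGaussianTailBound (u - ε / (2 * u)) + stdGaussianTailBound (u + ε / (2 * u)) ≤ δ := by
  rcases le_or_gt 0 (u - ε / (2 * u)) with hs | hs
  · exact stdGaussianTailBound_sub_add_le_of_nonneg hε hδ.1 hu hu₀ hs
  · exact stdGaussianTailBound_sub_add_le_of_neg hε.2 hδ hu hu₀ hs

end ProbabilityTheory

lemma log_gaussPdf_div_gaussPdf (μ₁ μ₂ σ x : ℝ) :
    log (gaussPdf μ₁ σ x / gaussPdf μ₂ σ x) = ((x - μ₂) ^ 2 - (x - μ₁) ^ 2) / (2 * σ ^ 2) := by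
  rcases eq_or_ne σ 0 with rfl | hσ
  · simp [gaussPdf]
  have hC : 1 / (σ * √(2 * π)) ≠ 0 := by positivity
  rw [gaussPdf, gaussPdf, mul_div_mul_left _ _ hC, ← exp_sub, log_exp]
  ring

lemma setOf_lt_abs_log_gaussPdf_div_subset {μ₁ μ₂ σ ε u : ℝ} (hσ : 0 < σ) (hu : 0 < u)
    (hεu : u * |μ₁ - μ₂| = ε * σ) :
    {x | ε < |log (gaussPdf μ₁ σ x / gaussPdf μ₂ σ x)|} ⊆
        Ici (μ₁ + σ * (u - ε / (2 * u))) ∪ Iic (μ₁ - σ * (u + ε / (2 * u))) ∨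
      {x | ε < |log (gaussPdf μ₁ σ x / gaussPdf μ₂ σ x)|} ⊆
        Iic (μ₁ - σ * (u - ε / (2 * u))) ∪ Ici (μ₁ + σ * (u + ε / (2 * u))) := by
  set a := μ₁ - μ₂
  have hhalf : σ * (ε / (2 * u)) = |a| / 2 := by
    field_simp
    linarith
  have hfar (x : ℝ) (hx : ε < |log (gaussPdf μ₁ σ x / gaussPdf μ₂ σ x)|) :
      2 * (σ * u) < |2 * (x - μ₁) + a| := by
    have hdiff : (x - μ₂) ^ 2 - (x - μ₁) ^ 2 = a * (2 * (x - μ₁) + a) := by ring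
    rw [log_gaussPdf_div_gaussPdf, hdiff, abs_div, abs_mul, abs_of_pos (by positivity : 0 < 2 * σ ^ 2),
      lt_div_iff₀ (by positivity)] at hx
    refine lt_of_mul_lt_mul_left ?_ (abs_nonneg a)
    linear_combination hx + 2 * σ * hεu
  rcases le_or_gt 0 a with ha | ha
  · left
    intro x hx
    rcases lt_abs.mp (hfar x hx) with h | h
    · left
      simp only [mem_Ici, mul_sub, hhalf, abs_of_nonneg ha]
      linarith
    · right
      simp only [mem_Iic, mul_add, hhalf, abs_of_nonneg ha]
      linarith
  · right
    intro x hx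
    rcases lt_abs.mp (hfar x hx) with h | h
    · right
      simp only [mem_Ici, mul_add, hhalf, abs_of_neg ha]
      linarith
    · left
      simp only [mem_Iic, mul_sub, hhalf, abs_of_neg ha]
      linarith

theorem gaussian_privacy_loss_tail_general (μ₁ μ₂ σ Δ ε δ : ℝ)
    (hμ : |μ₁ - μ₂| ≤ Δ)
    (hε : ε ∈ Set.Ioo (0 : ℝ) 1) (hδ : δ ∈ Set.Ioo (0 : ℝ) 1)
    (hσ : (Δ / ε) * Real.sqrt (2 * Real.log (1.25 / δ)) ≤ σ) :
    gaussianReal μ₁ (Real.toNNReal (σ ^ 2))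
        {x | ε < |Real.log (gaussPdf μ₁ σ x / gaussPdf μ₂ σ x)|} ≤
      ENNReal.ofReal δ := by
  have hε₀ := hε.1
  rcases eq_or_ne μ₁ μ₂ with rfl | hμ₁₂
  · simp [hε₀.not_gt]
  have hd : 0 < |μ₁ - μ₂| := abs_pos.mpr (sub_ne_zero.mpr hμ₁₂)
  have hΔ : 0 < Δ := hd.trans_le hμ
  have hlog : 0 < log (1.25 / δ) := log_pos (by rw [lt_div_iff₀ hδ.1]; linarith [hδ.2])
  have hσ₀ : 0 < σ := lt_of_lt_of_le (by positivity) hσ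
  set u := ε * σ / |μ₁ - μ₂|
  have hu₀ : 0 < u := by positivity
  have hεu : u * |μ₁ - μ₂| = ε * σ := div_mul_cancel₀ _ hd.ne'
  have hu : √(2 * log (1.25 / δ)) ≤ u := calc
    √(2 * log (1.25 / δ)) ≤ ε * σ / Δ := by
      rw [le_div_iff₀ hΔ]
      rw [div_mul_eq_mul_div, div_le_iff₀ hε₀] at hσ
      linarith
    _ ≤ u := div_le_div_of_nonneg_left (by positivity) hd hμ
  have htails := stdGaussianTailBound_sub_add_le hε hδ (sqrt_le_iff.mp hu).2 hu₀
  rw [← ofReal_measureReal]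
  refine ENNReal.ofReal_le_ofReal ?_
  rcases setOf_lt_abs_log_gaussPdf_div_subset hσ₀ hu₀ hεu with hB | hB
  · exact (measureReal_mono hB).trans ((gaussianReal_real_Ici_union_Iic_le hσ₀ _ _ _).trans htails)
  · rw [union_comm] at hB
    refine (measureReal_mono hB).trans ((gaussianReal_real_Ici_union_Iic_le hσ₀ _ _ _).trans ?_)
    linarith

/-- Privacy-loss tail bound for two Gaussians: the set of points where the
absolute log-density ratio exceeds ε has probability at most δ under N(μ₁, σ²),
when σ ≥ (Δ/ε)·√(2·ln(1.25/δ)) and ε ∈ (0,1). -/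
theorem gaussian_privacy_loss_tail (μ₁ μ₂ σ Δ ε δ : ℝ)
    (hΔ : 0 < Δ) (hμ : |μ₁ - μ₂| ≤ Δ)
    (hε : ε ∈ Set.Ioo (0 : ℝ) 1) (hδ : δ ∈ Set.Ioo (0 : ℝ) 1)
    (hσ : (Δ / ε) * Real.sqrt (2 * Real.log (1.25 / δ)) ≤ σ) :
    gaussianReal μ₁ (Real.toNNReal (σ ^ 2))
        {x | ε < |Real.log (gaussPdf μ₁ σ x / gaussPdf μ₂ σ x)|} ≤
      ENNReal.ofReal δ :=
  gaussian_privacy_loss_tail_general μ₁ μ₂ σ Δ ε δ hμ hε hδ hσ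
end
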